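/- arXiv:2206.09016 — 2 statements merged into one kernel-verified Lean document; each statement's English description precedes it below -/
import Mathlib

section
/- Let d ∈ ℕ. Let f : ℝ^d × ℝ → ℝ^d be continuously differentiable and twice continuously differentiable in its first (space) argument, and let u : ℝ × ℝ^d → ℝ be twice continuously differentiable. Suppose u satisfies the transport (continuity) equation ∂_t u(t,x) = -⟨∇_x u(t,x), f(x,t)⟩ - tr(D_x f(x,t)) for all (t,x) ∈ ℝ × ℝ^d, where D_x f denotes the Jacobian matrix of f in x and tr its trace. Let z : ℝ → ℝ^d be differentiable with z'(t) = f(z(t), t) for all t. Then the curve t ↦ ∇_x u(t, z(t)) is differentiable, and for all t it satisfies d/dt [∇_x u(t, z(t))] = -(D_x f(z(t), t))ᵀ ∇_x u(t, z(t)) - ∇_x [x ↦ tr(D_x f(x, t))](z(t)). -/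
/-!
Write `U = uncurry u` and `v = ż(t) = f(z t, t)`. Differentiating `∇ₓU(s, z s)` in `s` gives the
Hessian of `U` at `(t, z t)` applied to `(1, v)` and `(0, ·)`; by symmetry of the Hessian this is
the spatial gradient of `x ↦ DU(t, x)(1, v)`. The transport equation rewrites this function as
`⟪∇ₓu(t, x), v - f(x, t)⟫ - tr Dₓf(x, t)`, and since `v - f(x, t)` vanishes at `x = z t`, its
gradient there is `-(Dₓf)ᵀ ∇ₓu - ∇ₓ tr Dₓf`.
-/

open Function InnerProductSpace

section Uncurry

variable {E F : Type*} [NormedAddCommGroup E] [NormedSpace ℝ E] [NormedAddCommGroup F]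
  [NormedSpace ℝ F] {u : ℝ → E → F} {s : ℝ} {x : E}

theorem hasFDerivAt_of_uncurry (hu : DifferentiableAt ℝ (uncurry u) (s, x)) :
    HasFDerivAt (u s) (fderiv ℝ (uncurry u) (s, x) ∘L .inr ℝ ℝ E) x :=
  hu.hasFDerivAt.comp x (hasFDerivAt_prodMk_right s x)

theorem fderiv_uncurry_apply_one (hu : DifferentiableAt ℝ (uncurry u) (s, x)) (v : E) :
    fderiv ℝ (uncurry u) (s, x) (1, v) = deriv (fun r => u r x) s + fderiv ℝ (u s) x v := by
  have hs : HasDerivAt (fun r => u r x) (fderiv ℝ (uncurry u) (s, x) (1, 0)) s :=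
    (hu.hasFDerivAt.comp_hasDerivAt s ((hasDerivAt_id' s).prodMk (hasDerivAt_const s x)) :)
  rw [hs.deriv, (hasFDerivAt_of_uncurry hu).fderiv, ContinuousLinearMap.comp_apply,
    ContinuousLinearMap.inr_apply, ← map_add, Prod.mk_add_mk, add_zero, zero_add]

end Uncurry

theorem ContDiff.differentiable_trace_fderiv {E : Type*} [NormedAddCommGroup E] [NormedSpace ℝ E]
    [FiniteDimensional ℝ E] {F : E → E} (hF : ContDiff ℝ 2 F) :
    Differentiable ℝ (fun x => LinearMap.trace ℝ E (fderiv ℝ F x : E →ₗ[ℝ] E)) :=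
  (LinearMap.toContinuousLinearMap
      ((LinearMap.trace ℝ E).comp (ContinuousLinearMap.coeLM ℝ))).differentiable.comp
    ((hF.fderiv_right (by norm_num)).differentiable one_ne_zero)

section Gradient

variable {E : Type*} [NormedAddCommGroup E] [InnerProductSpace ℝ E] [CompleteSpace E]

theorem HasGradientAt.sub {f g : E → ℝ} {f' g' x : E} (hf : HasGradientAt f f' x)
    (hg : HasGradientAt g g' x) : HasGradientAt (fun y => f y - g y) (f' - g') x := by
  rw [hasGradientAt_iff_hasFDerivAt] at *
  rw [map_sub]
  exact hf.sub hg

theorem hasGradientAt_inner_of_eq_zero {g h : E → E} {h' : E →L[ℝ] E} {x : E}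
    (hg : DifferentiableAt ℝ g x) (hh : HasFDerivAt h h' x) (hx : h x = 0) :
    HasGradientAt (fun y => ⟪g y, h y⟫_ℝ) (ContinuousLinearMap.adjoint h' (g x)) x := by
  rw [hasGradientAt_iff_hasFDerivAt]
  refine (hg.hasFDerivAt.inner ℝ hh).congr_fderiv ?_
  ext w
  simp [hx, ContinuousLinearMap.adjoint_inner_left]

variable {u : ℝ → E → ℝ}

theorem hasFDerivAt_gradient_uncurry (hu : ContDiff ℝ 2 (uncurry u)) (p : ℝ × E) :
    HasFDerivAt (fun q : ℝ × E => gradient (u q.1) q.2)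
      ((toDual ℝ E).symm.toContinuousLinearEquiv.toContinuousLinearMap ∘L
        (ContinuousLinearMap.compL ℝ E (ℝ × E) ℝ).flip (.inr ℝ ℝ E) ∘L
        fderiv ℝ (fderiv ℝ (uncurry u)) p) p := by
  have hDu : HasFDerivAt (fderiv ℝ (uncurry u)) (fderiv ℝ (fderiv ℝ (uncurry u)) p) p :=
    ((hu.fderiv_right le_rfl).differentiable one_ne_zero p).hasFDerivAt
  have hgrad : (fun q : ℝ × E => gradient (u q.1) q.2)
      = fun q => (toDual ℝ E).symm (fderiv ℝ (uncurry u) q ∘L .inr ℝ ℝ E) := by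
    funext q
    rw [← (hasFDerivAt_of_uncurry (hu.differentiable two_ne_zero q)).fderiv]
    rfl
  rw [hgrad]
  exact ((toDual ℝ E).symm.toContinuousLinearEquiv.hasFDerivAt.comp p
    (((ContinuousLinearMap.compL ℝ E (ℝ × E) ℝ).flip (.inr ℝ ℝ E)).hasFDerivAt.comp p hDu))

theorem hasDerivAt_gradient_uncurry_comp (hu : ContDiff ℝ 2 (uncurry u)) {γ : ℝ → E} {v : E}
    {t : ℝ} (hγ : HasDerivAt γ v t) :
    HasDerivAt (fun s => gradient (u s) (γ s))
      (gradient (fun x => fderiv ℝ (uncurry u) (t, x) (1, v)) (γ t)) t := by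
  set H := fderiv ℝ (fderiv ℝ (uncurry u)) (t, γ t)
  have hH : HasFDerivAt (fderiv ℝ (uncurry u)) H (t, γ t) :=
    ((hu.fderiv_right le_rfl).differentiable one_ne_zero _).hasFDerivAt
  have hgrad : HasGradientAt (fun x => fderiv ℝ (uncurry u) (t, x) (1, v))
      ((toDual ℝ E).symm (H (1, v) ∘L .inr ℝ ℝ E)) (γ t) := by
    rw [hasGradientAt_iff_hasFDerivAt, LinearIsometryEquiv.apply_symm_apply]
    refine (((ContinuousLinearMap.apply ℝ ℝ ((1 : ℝ), v)).hasFDerivAt.comp _ hH).comp _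
      (hasFDerivAt_prodMk_right t (γ t))).congr_fderiv ?_
    ext w
    exact (hu.contDiffAt.isSymmSndFDerivAt (by simp)).eq _ _
  rw [hgrad.gradient]
  exact (hasFDerivAt_gradient_uncurry hu (t, γ t)).comp_hasDerivAt t ((hasDerivAt_id t).prodMk hγ)

end Gradient

theorem path_gradient_ode_general
    (d : ℕ)
    (f : EuclideanSpace ℝ (Fin d) → ℝ → EuclideanSpace ℝ (Fin d))
    (u : ℝ → EuclideanSpace ℝ (Fin d) → ℝ)
    (hf_space : ∀ t : ℝ, ContDiff ℝ 2 (fun x => f x t))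
    (hu : ContDiff ℝ 2 (fun p : ℝ × EuclideanSpace ℝ (Fin d) => u p.1 p.2))
    (transport :
      ∀ (t : ℝ) (x : EuclideanSpace ℝ (Fin d)),
        deriv (fun s => u s x) t
          = - inner ℝ (gradient (fun y => u t y) x) (f x t)
            - LinearMap.trace ℝ (EuclideanSpace ℝ (Fin d))
                (fderiv ℝ (fun y => f y t) x : EuclideanSpace ℝ (Fin d) →ₗ[ℝ] EuclideanSpace ℝ (Fin d)))
    (z : ℝ → EuclideanSpace ℝ (Fin d))
    (hz : ∀ t : ℝ, HasDerivAt z (f (z t) t) t) :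
    ∀ t : ℝ,
      HasDerivAt (fun s => gradient (fun y => u s y) (z s))
        (- (ContinuousLinearMap.adjoint (fderiv ℝ (fun y => f y t) (z t)))
              (gradient (fun y => u t y) (z t))
          - gradient
              (fun x =>
                LinearMap.trace ℝ (EuclideanSpace ℝ (Fin d))
                  (fderiv ℝ (fun y => f y t) x : EuclideanSpace ℝ (Fin d) →ₗ[ℝ] EuclideanSpace ℝ (Fin d)))
              (z t))
        t := by
  intro t
  have hu_t : DifferentiableAt ℝ (gradient (u t)) (z t) :=
    ((hasFDerivAt_gradient_uncurry hu (t, z t)).comp (z t)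
      (hasFDerivAt_prodMk_right t (z t))).differentiableAt
  have hf_t : HasFDerivAt (fun x => f (z t) t - f x t) (-fderiv ℝ (fun y => f y t) (z t)) (z t) :=
    ((hf_space t).differentiable two_ne_zero (z t)).hasFDerivAt.const_sub _
  have hflow : (fun x => fderiv ℝ (uncurry u) (t, x) (1, f (z t) t))
      = fun x => ⟪gradient (u t) x, f (z t) t - f x t⟫_ℝ
          - LinearMap.trace ℝ (EuclideanSpace ℝ (Fin d))
              (fderiv ℝ (fun y => f y t) x :
                EuclideanSpace ℝ (Fin d) →ₗ[ℝ] EuclideanSpace ℝ (Fin d)) := by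
    funext x
    rw [fderiv_uncurry_apply_one (hu.differentiable two_ne_zero _), transport,
      ← inner_gradient_left, inner_sub_right]
    ring
  have hrhs := (hasGradientAt_inner_of_eq_zero hu_t hf_t (sub_self _)).sub
    ((hf_space t).differentiable_trace_fderiv (z t)).hasGradientAt
  have hpath := hasDerivAt_gradient_uncurry_comp hu (hz t)
  rw [hflow, hrhs.gradient, map_neg] at hpath
  exact hpath

/-- **Theorem 1 of the paper.**
Let `f : ℝ^d × ℝ → ℝ^d` be continuously differentiable, and twice continuously
differentiable in its first (space) argument, and let `u : ℝ × ℝ^d → ℝ` be twice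
continuously differentiable.  Suppose `u` satisfies the transport (continuity) equation
`∂ₜ u(t,x) = -⟪∇ₓ u(t,x), f(x,t)⟫ - tr (Dₓ f(x,t))`.
If `z : ℝ → ℝ^d` solves `z'(t) = f(z(t), t)`, then `t ↦ ∇ₓ u(t, z(t))` is differentiable,
with derivative `-(Dₓ f(z(t),t))ᵀ ∇ₓ u(t,z(t)) - ∇ₓ [x ↦ tr (Dₓ f(x,t))](z(t))`. -/
theorem path_gradient_ode
    (d : ℕ)
    (f : EuclideanSpace ℝ (Fin d) → ℝ → EuclideanSpace ℝ (Fin d))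
    (u : ℝ → EuclideanSpace ℝ (Fin d) → ℝ)
    (hf : ContDiff ℝ 1 (fun p : EuclideanSpace ℝ (Fin d) × ℝ => f p.1 p.2))
    (hf_space : ∀ t : ℝ, ContDiff ℝ 2 (fun x => f x t))
    (hu : ContDiff ℝ 2 (fun p : ℝ × EuclideanSpace ℝ (Fin d) => u p.1 p.2))
    (transport :
      ∀ (t : ℝ) (x : EuclideanSpace ℝ (Fin d)),
        deriv (fun s => u s x) t
          = - inner ℝ (gradient (fun y => u t y) x) (f x t)
            - LinearMap.trace ℝ (EuclideanSpace ℝ (Fin d))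
                (fderiv ℝ (fun y => f y t) x : EuclideanSpace ℝ (Fin d) →ₗ[ℝ] EuclideanSpace ℝ (Fin d)))
    (z : ℝ → EuclideanSpace ℝ (Fin d))
    (hz : ∀ t : ℝ, HasDerivAt z (f (z t) t) t) :
    ∀ t : ℝ,
      HasDerivAt (fun s => gradient (fun y => u s y) (z s))
        (- (ContinuousLinearMap.adjoint (fderiv ℝ (fun y => f y t) (z t)))
              (gradient (fun y => u t y) (z t))
          - gradient
              (fun x =>
                LinearMap.trace ℝ (EuclideanSpace ℝ (Fin d))
                  (fderiv ℝ (fun y => f y t) x : EuclideanSpace ℝ (Fin d) →ₗ[ℝ] EuclideanSpace ℝ (Fin d)))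
              (z t))
        t :=
  path_gradient_ode_general d f u hf_space hu transport z hz
end

section
/- Let p, d, N ∈ ℕ with N ≥ 1 and θ* ∈ ℝ^p. Let q_Z be a probability measure on ℝ^d, g : ℝ^p × ℝ^d → ℝ^d differentiable in its first argument, and let q : ℝ^d → (0,∞) be a differentiable probability density (with respect to Lebesgue measure) equal to the density of the pushforward of q_Z under g(θ*, ·). Let P : ℝ^d → (0,∞) be differentiable with q(x) = P(x) for all x ∈ ℝ^d. Let s : ℝ^d → ℝ^p be measurable (the score x ↦ ∇_θ log q_θ(x)|_{θ*}) with ∫ s(x) q(x) dx = 0 and ∫ ‖s(x)‖² q(x) dx < ∞, and let I ∈ ℝ^{p×p} be the Fisher information matrix I_{ij} = ∫ s(x)_i s(x)_j q(x) dx. For i.i.d. z^{(1)}, …, z^{(N)} with law q_Z define G_path := (1/N) Σ_{l} (D_θ g(θ, z^{(l)})|_{θ*})ᵀ ∇_x [log q − log P](g(θ*, z^{(l)})), G_score := (1/N) Σ_{l} s(g(θ*, z^{(l)})), and G_total := G_path + G_score. Then G_total = G_score almost surely, E[G_total] = 0, and the covariance matrix of G_total equals (1/N) · I; in particular, if I ≠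 0 the total-gradient estimator has non-vanishing covariance at the perfectly matched parameter θ*. -/
open MeasureTheory ProbabilityTheory

/-!
At `θ*` we have `q = P`, so `log q - log P` is constant and the path part of the estimator vanishes
identically: `G_total` is the sample mean of the i.i.d. scores `s (x_l)`, where `x_l = g θ* z_l`
has law `q dx`. Under `q dx` the score is centred with second-moment matrix `I`, and independent
copies contribute no cross covariance, so the sample mean of `N` of them has covariance `I / N`.
-/

section WithDensityOfReal

variable {α E : Type*} [MeasurableSpace α] [NormedAddCommGroup E] {μ : Measure α} {q : α → ℝ}

theorem integral_withDensity_ofReal [NormedSpace ℝ E] (hq : Measurable q) (hq0 : ∀ x, 0 ≤ q x)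
    (φ : α → E) :
    ∫ x, φ x ∂μ.withDensity (fun x => ENNReal.ofReal (q x)) = ∫ x, q x • φ x ∂μ := by
  rw [integral_withDensity_eq_integral_toReal_smul hq.ennreal_ofReal
    (ae_of_all _ fun _ => ENNReal.ofReal_lt_top)]
  simp_rw [ENNReal.toReal_ofReal (hq0 _)]

theorem integrable_withDensity_ofReal_iff [NormedSpace ℝ E] (hq : Measurable q)
    (hq0 : ∀ x, 0 ≤ q x) {φ : α → E} :
    Integrable φ (μ.withDensity (fun x => ENNReal.ofReal (q x)))
      ↔ Integrable (fun x => q x • φ x) μ := by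
  rw [integrable_withDensity_iff_integrable_smul' hq.ennreal_ofReal
    (ae_of_all _ fun _ => ENNReal.ofReal_lt_top)]
  simp_rw [ENNReal.toReal_ofReal (hq0 _)]

theorem memLp_two_withDensity_ofReal (hq : Measurable q) (hq0 : ∀ x, 0 ≤ q x) {φ : α → E}
    (hφ : AEStronglyMeasurable φ μ) (hφq : Integrable (fun x => q x * ‖φ x‖ ^ 2) μ) :
    MemLp φ 2 (μ.withDensity (fun x => ENNReal.ofReal (q x))) := by
  rw [memLp_two_iff_integrable_sq_norm (hφ.mono_ac (withDensity_absolutelyContinuous _ _)),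
    integrable_withDensity_ofReal_iff hq hq0]
  exact hφq

end WithDensityOfReal

theorem covariance_apply_eq_integral_mul {E ι : Type*} [MeasurableSpace E] [Fintype ι]
    {ν : Measure E} {s : E → EuclideanSpace ℝ ι} (hs : Integrable s ν) (hs0 : ∫ y, s y ∂ν = 0)
    (i j : ι) :
    cov[fun y => s y i, fun y => s y j; ν] = ∫ y, s y i * s y j ∂ν := by
  have hs0_apply : ∀ k, ∫ y, s y k ∂ν = 0 := fun k => by
    simpa [hs0] using (EuclideanSpace.proj (𝕜 := ℝ) k).integral_comp_comm hs
  simp [covariance, hs0_apply]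

section IIDSample

variable {Ω E ι : Type*} [MeasurableSpace Ω] [MeasurableSpace E] [Fintype ι]
  {μ : Measure Ω} {ν : Measure E} {x : ι → Ω → E}

theorem integral_sum_comp_of_measurePreserving {F : Type*} [NormedAddCommGroup F]
    [NormedSpace ℝ F] (hx : ∀ l, MeasurePreserving (x l) μ ν) {φ : E → F}
    (hφ : Integrable φ ν) :
    ∫ ω, ∑ l, φ (x l ω) ∂μ = Fintype.card ι • ∫ y, φ y ∂ν := by
  have hφx : ∀ l, Integrable (fun ω => φ (x l ω)) μ := fun l =>
    (hx l).integrable_comp_of_integrable hφ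
  have h : ∀ l, ∫ ω, φ (x l ω) ∂μ = ∫ y, φ y ∂ν := fun l => by
    rw [← (hx l).map_eq, integral_map (hx l).aemeasurable ((hx l).map_eq ▸ hφ.1)]
  rw [integral_finsetSum _ fun l _ => hφx l]
  simp [h]

theorem covariance_sum_comp_of_iIndepFun [IsFiniteMeasure μ] (hind : iIndepFun x μ)
    (hx : ∀ l, MeasurePreserving (x l) μ ν) {φ ψ : E → ℝ} (hφ : MemLp φ 2 ν)
    (hψ : MemLp ψ 2 ν) :
    cov[fun ω => ∑ l, φ (x l ω), fun ω => ∑ l, ψ (x l ω); μ]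
      = Fintype.card ι * cov[φ, ψ; ν] := by
  have hφx : ∀ l, MemLp (fun ω => φ (x l ω)) 2 μ := fun l => hφ.comp_measurePreserving (hx l)
  have hψx : ∀ l, MemLp (fun ω => ψ (x l ω)) 2 μ := fun l => hψ.comp_measurePreserving (hx l)
  have hdiag : ∀ l, cov[fun ω => φ (x l ω), fun ω => ψ (x l ω); μ] = cov[φ, ψ; ν] := fun l => by
    rw [← (hx l).map_eq, covariance_map_fun ((hx l).map_eq ▸ hφ.1) ((hx l).map_eq ▸ hψ.1)
      (hx l).aemeasurable]
  have hoff : ∀ l m, l ≠ m → cov[fun ω => φ (x l ω), fun ω => ψ (x m ω); μ] = 0 :=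
    fun l m hlm =>
      ((hind.indepFun hlm).comp₀ (hx l).aemeasurable (hx m).aemeasurable
        ((hx l).map_eq ▸ hφ.1.aemeasurable) ((hx m).map_eq ▸ hψ.1.aemeasurable)).covariance_eq_zero
        (hφx l) (hψx m)
  rw [covariance_fun_sum_fun_sum hφx hψx]
  simp_rw [Finset.sum_eq_single_of_mem _ (Finset.mem_univ _) fun m _ hml => hoff _ m (Ne.symm hml)]
  simp [hdiag]

theorem covariance_inv_card_smul_sum_comp_apply [IsFiniteMeasure μ] (hind : iIndepFun x μ)
    (hx : ∀ l, MeasurePreserving (x l) μ ν) {κ : Type*} [Fintype κ]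
    {s : E → EuclideanSpace ℝ κ} (hs : MemLp s 2 ν) (i j : κ) :
    cov[fun ω => ((Fintype.card ι : ℝ)⁻¹ • ∑ l, s (x l ω)) i,
        fun ω => ((Fintype.card ι : ℝ)⁻¹ • ∑ l, s (x l ω)) j; μ]
      = (Fintype.card ι : ℝ)⁻¹ * cov[fun y => s y i, fun y => s y j; ν] := by
  have hs_apply : ∀ k, MemLp (fun y => s y k) 2 ν := fun k =>
    hs.continuousLinearMap_comp (EuclideanSpace.proj (𝕜 := ℝ) k)
  simp only [PiLp.smul_apply, WithLp.ofLp_sum, Finset.sum_apply, smul_eq_mul]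
  rw [covariance_const_mul_left, covariance_const_mul_right,
    covariance_sum_comp_of_iIndepFun hind hx (hs_apply i) (hs_apply j)]
  rcases eq_or_ne (Fintype.card ι : ℝ) 0 with h | h
  · simp [h]
  · field_simp

end IIDSample

theorem total_gradient_covariance_at_optimum_general
    (p d N : ℕ) (hN : 1 ≤ N)
    (θstar : EuclideanSpace ℝ (Fin p))
    {Ω : Type*} [MeasurableSpace Ω] (μ : Measure Ω) [IsProbabilityMeasure μ]
    (qZ : Measure (EuclideanSpace ℝ (Fin d))) [IsProbabilityMeasure qZ]
    (g : EuclideanSpace ℝ (Fin p) → EuclideanSpace ℝ (Fin d) → EuclideanSpace ℝ (Fin d))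
    (hg_meas : Measurable (g θstar))
    (q : EuclideanSpace ℝ (Fin d) → ℝ) (hq_pos : ∀ x, 0 < q x)
    (hq_diff : Differentiable ℝ q)
    (hq_density :
      Measure.map (g θstar) qZ
        = (volume : Measure (EuclideanSpace ℝ (Fin d))).withDensity
            (fun x => ENNReal.ofReal (q x)))
    (P : EuclideanSpace ℝ (Fin d) → ℝ)
    (heq : ∀ x, q x = P x)
    (s : EuclideanSpace ℝ (Fin d) → EuclideanSpace ℝ (Fin p)) (hs : Measurable s)
    (hs_mean : ∫ x, q x • s x ∂(volume : Measure (EuclideanSpace ℝ (Fin d))) = 0)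
    (hs_sq : Integrable (fun x => q x * ‖s x‖ ^ 2)
      (volume : Measure (EuclideanSpace ℝ (Fin d))))
    (I : Matrix (Fin p) (Fin p) ℝ)
    (hI : ∀ i j, I i j
      = ∫ x, s x i * s x j * q x ∂(volume : Measure (EuclideanSpace ℝ (Fin d))))
    (z : Fin N → Ω → EuclideanSpace ℝ (Fin d))
    (hz_meas : ∀ l, Measurable (z l))
    (hz_indep : iIndepFun z μ)
    (hz_law : ∀ l, Measure.map (z l) μ = qZ)
    (Gpath Gscore Gtotal : Ω → EuclideanSpace ℝ (Fin p))
    (hGpath : ∀ ω, Gpath ω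
      = (N : ℝ)⁻¹ • ∑ l : Fin N,
          (ContinuousLinearMap.adjoint (fderiv ℝ (fun θ => g θ (z l ω)) θstar))
            (gradient (fun y => Real.log (q y) - Real.log (P y)) (g θstar (z l ω))))
    (hGscore : ∀ ω, Gscore ω = (N : ℝ)⁻¹ • ∑ l : Fin N, s (g θstar (z l ω)))
    (hGtotal : ∀ ω, Gtotal ω = Gpath ω + Gscore ω) :
    (∀ᵐ ω ∂μ, Gtotal ω = Gscore ω) ∧
    (∫ ω, Gtotal ω ∂μ = 0) ∧
    (∀ i j, ∫ ω, (Gtotal ω i - (∫ ω', Gtotal ω' i ∂μ)) * (Gtotal ω j - (∫ ω', Gtotal ω' j ∂μ)) ∂μ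
        = (N : ℝ)⁻¹ * I i j) ∧
    (I ≠ 0 →
      ¬ (∀ i j, ∫ ω, (Gtotal ω i - (∫ ω', Gtotal ω' i ∂μ)) *
            (Gtotal ω j - (∫ ω', Gtotal ω' j ∂μ)) ∂μ = 0)) := by
  set ν := (volume : Measure (EuclideanSpace ℝ (Fin d))).withDensity
    (fun x => ENNReal.ofReal (q x))
  have hq_meas : Measurable q := hq_diff.continuous.measurable
  have hq0 : ∀ x, 0 ≤ q x := fun x => (hq_pos x).le
  have hGtotal_eq : Gtotal = Gscore := funext fun ω => by
    have hlog : (fun y => Real.log (q y) - Real.log (P y)) = fun _ => 0 :=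
      funext fun y => by rw [heq y, sub_self]
    simp [hGtotal ω, hGpath ω, hlog]
  subst hGtotal_eq
  have hg_mp : MeasurePreserving (g θstar) qZ ν := ⟨hg_meas, hq_density⟩
  have : IsProbabilityMeasure ν := by
    rw [← hq_density]; exact Measure.isProbabilityMeasure_map hg_meas.aemeasurable
  have hx : ∀ l, MeasurePreserving (fun ω => g θstar (z l ω)) μ ν := fun l =>
    hg_mp.comp ⟨hz_meas l, hz_law l⟩
  have hx_indep : iIndepFun (fun l ω => g θstar (z l ω)) μ :=
    hz_indep.comp (fun _ => g θstar) fun _ => hg_meas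
  have hs2 : MemLp s 2 ν := memLp_two_withDensity_ofReal hq_meas hq0 hs.aestronglyMeasurable hs_sq
  have hν_mean : ∫ x, s x ∂ν = 0 := by rw [integral_withDensity_ofReal hq_meas hq0, hs_mean]
  have hν_cov : ∀ i j, cov[fun x => s x i, fun x => s x j; ν] = I i j := fun i j => by
    rw [covariance_apply_eq_integral_mul (hs2.integrable one_le_two) hν_mean, hI,
      integral_withDensity_ofReal hq_meas hq0]
    simp only [smul_eq_mul, mul_comm]
  have hcov : ∀ i j, cov[fun ω => Gtotal ω i, fun ω => Gtotal ω j; μ] = (N : ℝ)⁻¹ * I i j :=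
    fun i j => by
      simpa [hGscore, hν_cov] using covariance_inv_card_smul_sum_comp_apply hx_indep hx hs2 i j
  refine ⟨ae_of_all _ fun _ => rfl, ?_, hcov, fun hI0 hzero => hI0 ?_⟩
  · simp_rw [hGscore, integral_smul, integral_sum_comp_of_measurePreserving hx
      (hs2.integrable one_le_two), hν_mean, smul_zero]
  · ext i j
    simpa [Nat.one_le_iff_ne_zero.1 hN] using (hcov i j).symm.trans (hzero i j)

/-- At a perfectly matched variational parameter `θ*` (where the variational density `q`
equals the target density `P`), the path-gradient part of the total-gradient estimator
vanishes, so `G_total = G_score` almost surely; hence `G_total` has zero mean and its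
covariance equals `(1/N) · I`, the Fisher information divided by the sample size — in
particular it is non-vanishing whenever `I ≠ 0`. -/
theorem total_gradient_covariance_at_optimum
    (p d N : ℕ) (hN : 1 ≤ N)
    (θstar : EuclideanSpace ℝ (Fin p))
    {Ω : Type*} [MeasurableSpace Ω] (μ : Measure Ω) [IsProbabilityMeasure μ]
    (qZ : Measure (EuclideanSpace ℝ (Fin d))) [IsProbabilityMeasure qZ]
    (g : EuclideanSpace ℝ (Fin p) → EuclideanSpace ℝ (Fin d) → EuclideanSpace ℝ (Fin d))
    (hg_diff : ∀ z, Differentiable ℝ (fun θ => g θ z))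
    (hg_meas : Measurable (g θstar))
    (q : EuclideanSpace ℝ (Fin d) → ℝ) (hq_pos : ∀ x, 0 < q x)
    (hq_diff : Differentiable ℝ q)
    (hq_density :
      Measure.map (g θstar) qZ
        = (volume : Measure (EuclideanSpace ℝ (Fin d))).withDensity
            (fun x => ENNReal.ofReal (q x)))
    (P : EuclideanSpace ℝ (Fin d) → ℝ) (hP_pos : ∀ x, 0 < P x)
    (hP_diff : Differentiable ℝ P)
    (heq : ∀ x, q x = P x)
    (s : EuclideanSpace ℝ (Fin d) → EuclideanSpace ℝ (Fin p)) (hs : Measurable s)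
    (hs_mean : ∫ x, q x • s x ∂(volume : Measure (EuclideanSpace ℝ (Fin d))) = 0)
    (hs_sq : Integrable (fun x => q x * ‖s x‖ ^ 2)
      (volume : Measure (EuclideanSpace ℝ (Fin d))))
    (I : Matrix (Fin p) (Fin p) ℝ)
    (hI : ∀ i j, I i j
      = ∫ x, s x i * s x j * q x ∂(volume : Measure (EuclideanSpace ℝ (Fin d))))
    (z : Fin N → Ω → EuclideanSpace ℝ (Fin d))
    (hz_meas : ∀ l, Measurable (z l))
    (hz_indep : iIndepFun z μ)
    (hz_law : ∀ l, Measure.map (z l) μ = qZ)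
    (Gpath Gscore Gtotal : Ω → EuclideanSpace ℝ (Fin p))
    (hGpath : ∀ ω, Gpath ω
      = (N : ℝ)⁻¹ • ∑ l : Fin N,
          (ContinuousLinearMap.adjoint (fderiv ℝ (fun θ => g θ (z l ω)) θstar))
            (gradient (fun y => Real.log (q y) - Real.log (P y)) (g θstar (z l ω))))
    (hGscore : ∀ ω, Gscore ω = (N : ℝ)⁻¹ • ∑ l : Fin N, s (g θstar (z l ω)))
    (hGtotal : ∀ ω, Gtotal ω = Gpath ω + Gscore ω) :
    (∀ᵐ ω ∂μ, Gtotal ω = Gscore ω) ∧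
    (∫ ω, Gtotal ω ∂μ = 0) ∧
    (∀ i j, ∫ ω, (Gtotal ω i - (∫ ω', Gtotal ω' i ∂μ)) * (Gtotal ω j - (∫ ω', Gtotal ω' j ∂μ)) ∂μ
        = (N : ℝ)⁻¹ * I i j) ∧
    (I ≠ 0 →
      ¬ (∀ i j, ∫ ω, (Gtotal ω i - (∫ ω', Gtotal ω' i ∂μ)) *
            (Gtotal ω j - (∫ ω', Gtotal ω' j ∂μ)) ∂μ = 0)) :=
  total_gradient_covariance_at_optimum_general p d N hN θstar μ qZ g hg_meas q hq_pos hq_diff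
    hq_density P heq s hs hs_mean hs_sq I hI z hz_meas hz_indep hz_law Gpath Gscore Gtotal hGpath
    hGscore hGtotal
end
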